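/- Let U be a unitary operator on ℓ²(ℤ^d) such that U and U* map D_X into D_X, and suppose that for each j ∈ {1,…,d} there is a bounded operator C_j with C_jψ = X_jψ − U(X_j(U*ψ)) for all ψ ∈ D_X. Then for every ψ ∈ D_X and every n ∈ ℕ: ‖U^nψ‖_X² − ‖ψ‖_X² = 2·Σ_{m=1}^{n} Σ_{j=1}^{d} Re⟨C_j U^mψ, X_j U^mψ⟩ − Σ_{m=1}^{n} Σ_{j=1}^{d} ‖C_j U^mψ‖², and ‖U^{*n}ψ‖_X² − ‖ψ‖_X² = −2·Σ_{m=0}^{n−1} Σ_{j=1}^{d} Re⟨C_j U^{*m}ψ, X_j U^{*m}ψ⟩ + Σ_{m=0}^{n−1} Σ_{j=1}^{d} ‖C_j U^{*m}ψ‖². -/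

import Mathlib

noncomputable section

/-- `ℓ²(ℤ^d)`. -/
abbrev l2Zd (d : ℕ) : Type := lp (fun _ : (Fin d → ℤ) => ℂ) 2

/-- Membership in `D_X = ∩_j D(X_j)`: each `X_j φ = (β ↦ β_j φ(β))` is square-summable. -/
def memDX {d : ℕ} (φ : l2Zd d) : Prop :=
  ∀ j : Fin d, Memℓp (fun β : Fin d → ℤ => ((β j : ℤ) : ℂ) * φ β) 2

/-- `‖φ‖_X² = ‖φ‖² + Σ_j ‖X_j φ‖²` (written via `tsum`s). -/
noncomputable def xNormSq {d : ℕ} (φ : l2Zd d) : ℝ :=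
  ‖φ‖ ^ 2 + ∑ j : Fin d, ∑' β : Fin d → ℤ, (β j : ℝ) ^ 2 * ‖φ β‖ ^ 2

/-!
Writing `C_j = X_j - U X_j U*` as `U X_j U* φ = X_j φ - C_j φ` and using that `U` is isometric,
`‖X_j U* φ‖² = ‖X_j φ - C_j φ‖² = ‖X_j φ‖² - 2 Re⟨C_j φ, X_j φ⟩ + ‖C_j φ‖²`.
Summing over `j` gives the one-step change of `‖·‖_X²` under `U*`; applied at `U^{m+1} ψ`, resp.
`U*^m ψ`, it telescopes to both identities.
-/

theorem lp.norm_sq_eq_tsum {ι : Type*} {E : ι → Type*} [∀ i, NormedAddCommGroup (E i)]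
    (f : lp E 2) : ‖f‖ ^ 2 = ∑' i, ‖f i‖ ^ 2 := by
  simpa using lp.norm_rpow_eq_tsum (p := 2) (by norm_num) f

namespace l2Zd

variable {d : ℕ}

/-- The position operator `X_j`, applied to a vector of its domain. -/
def posOp (j : Fin d) (φ : l2Zd d) (hφ : memDX φ) : l2Zd d :=
  ⟨fun β => (β j : ℂ) * φ β, hφ j⟩

theorem posOp_apply (j : Fin d) (φ : l2Zd d) (hφ : memDX φ) (β : Fin d → ℤ) :
    posOp j φ hφ β = (β j : ℂ) * φ β := rfl

theorem norm_posOp_sq (j : Fin d) (φ : l2Zd d) (hφ : memDX φ) :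
    ‖posOp j φ hφ‖ ^ 2 = ∑' β : Fin d → ℤ, (β j : ℝ) ^ 2 * ‖φ β‖ ^ 2 := by
  rw [lp.norm_sq_eq_tsum]
  refine tsum_congr fun β => ?_
  rw [posOp_apply, norm_mul, mul_pow, Complex.norm_intCast, sq_abs]

theorem xNormSq_eq (φ : l2Zd d) (hφ : memDX φ) :
    xNormSq φ = ‖φ‖ ^ 2 + ∑ j, ‖posOp j φ hφ‖ ^ 2 := by
  simp only [xNormSq, norm_posOp_sq]

theorem inner_posOp_right (j : Fin d) (g φ : l2Zd d) (hφ : memDX φ) :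
    inner ℂ g (posOp j φ hφ) = ∑' β, (starRingEnd ℂ) (g β) * ((β j : ℂ) * φ β) := by
  rw [lp.inner_eq_tsum]
  exact tsum_congr fun β => by rw [RCLike.inner_apply, posOp_apply, mul_comm]

theorem memDX_pow_apply {V : l2Zd d →L[ℂ] l2Zd d} (hV : ∀ φ, memDX φ → memDX (V φ))
    {φ : l2Zd d} (hφ : memDX φ) (n : ℕ) : memDX ((V ^ n) φ) := by
  induction n with
  | zero => simpa using hφ
  | succ n ih => simpa [pow_succ'] using hV _ ih

/-- `C j = X_j - U X_j U*` on the vectors `ψ ∈ D_X` with `U* ψ ∈ D_X`. -/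
def IsPosCommutator (U : l2Zd d →L[ℂ] l2Zd d) (C : Fin d → (l2Zd d →L[ℂ] l2Zd d)) : Prop :=
  ∀ j ψ (hψ : memDX ψ) (hψ' : memDX (star U ψ)),
    C j ψ = posOp j ψ hψ - U (posOp j (star U ψ) hψ')

theorem isPosCommutator_of_apply {U : l2Zd d →L[ℂ] l2Zd d} {C : Fin d → (l2Zd d →L[ℂ] l2Zd d)}
    (hC : ∀ (j : Fin d) (ψ : l2Zd d) (_ : memDX ψ) (hψ' : memDX ((star U) ψ)) (β : Fin d → ℤ),
      (C j ψ) β = ((β j : ℤ) : ℂ) * ψ β - (U (posOp j (star U ψ) hψ')) β) :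
    IsPosCommutator U C := fun j ψ hψ hψ' => lp.ext <| funext <| hC j ψ hψ hψ'

section Unitary

variable {U : l2Zd d →L[ℂ] l2Zd d} {C : Fin d → (l2Zd d →L[ℂ] l2Zd d)}

theorem star_apply_pow_succ_apply (hU : U ∈ unitary (l2Zd d →L[ℂ] l2Zd d)) (φ : l2Zd d)
    (n : ℕ) : star U ((U ^ (n + 1)) φ) = (U ^ n) φ := by
  change (star U * U ^ (n + 1)) φ = _
  rw [pow_succ', ← mul_assoc, hU.1, one_mul]

theorem norm_posOp_star_apply_sq (hU : U ∈ unitary (l2Zd d →L[ℂ] l2Zd d))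
    (hC : IsPosCommutator U C) (j : Fin d) {φ : l2Zd d} (hφ : memDX φ)
    (hφ' : memDX (star U φ)) :
    ‖posOp j (star U φ) hφ'‖ ^ 2 =
      ‖posOp j φ hφ‖ ^ 2 - 2 * (inner ℂ (C j φ) (posOp j φ hφ)).re + ‖C j φ‖ ^ 2 := by
  have hUX : U (posOp j (star U φ) hφ') = posOp j φ hφ - C j φ := by
    rw [hC j φ hφ hφ', sub_sub_cancel]
  rw [← ContinuousLinearMap.norm_map_of_mem_unitary hU, hUX, norm_sub_sq (𝕜 := ℂ),
    inner_re_symm (𝕜 := ℂ)]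
  rfl

theorem xNormSq_sub_xNormSq_star_apply (hU : U ∈ unitary (l2Zd d →L[ℂ] l2Zd d))
    (hC : IsPosCommutator U C) {φ : l2Zd d} (hφ : memDX φ) (hφ' : memDX (star U φ)) :
    xNormSq φ - xNormSq (star U φ) =
      2 * ∑ j : Fin d, (∑' β : Fin d → ℤ,
          (starRingEnd ℂ) ((C j φ) β) * (((β j : ℤ) : ℂ) * φ β)).re -
        ∑ j : Fin d, ‖C j φ‖ ^ 2 := by
  rw [xNormSq_eq φ hφ, xNormSq_eq _ hφ',
    ContinuousLinearMap.norm_map_of_mem_unitary (Unitary.star_mem hU)]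
  simp only [norm_posOp_star_apply_sq hU hC _ hφ hφ', inner_posOp_right,
    Finset.sum_add_distrib, Finset.sum_sub_distrib, Finset.mul_sum]
  ring

end Unitary

end l2Zd

open l2Zd in
/-- Proposition 5.7 ("propag6"), identity part: if a unitary `U` on `ℓ²(ℤ^d)` (together
with `U*`) preserves `D_X`, and `C_j` are the bounded operators with
`C_jψ = X_jψ − U(X_j(U*ψ))` on `D_X`, then for all `ψ ∈ D_X` and `n ∈ ℕ`:
`‖U^nψ‖_X² − ‖ψ‖_X² = 2Σ_{m=1}^n Σ_j Re⟨C_j U^mψ, X_j U^mψ⟩ − Σ_{m=1}^n Σ_j ‖C_j U^mψ‖²`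
and the analogous identity for `U*`. -/
theorem stmt17 (d : ℕ) (U : l2Zd d →L[ℂ] l2Zd d)
    (hU : U ∈ unitary (l2Zd d →L[ℂ] l2Zd d))
    -- U and U* map D_X into D_X
    (hUD : ∀ φ : l2Zd d, memDX φ → memDX (U φ) ∧ memDX ((star U) φ))
    -- the bounded operators C_j = X_j − U X_j U* on D_X
    (C : Fin d → (l2Zd d →L[ℂ] l2Zd d))
    (hC : ∀ (j : Fin d) (ψ : l2Zd d) (hψ : memDX ψ) (hψ' : memDX ((star U) ψ))
      (β : Fin d → ℤ),
      (C j ψ) β = ((β j : ℤ) : ℂ) * ψ β -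
        (U (⟨fun β' : Fin d → ℤ => ((β' j : ℤ) : ℂ) * ((star U) ψ) β', hψ' j⟩ :
          l2Zd d)) β) :
    ∀ ψ : l2Zd d, memDX ψ → ∀ n : ℕ,
      (xNormSq ((U ^ n) ψ) - xNormSq ψ =
        2 * ∑ m ∈ Finset.Icc 1 n, ∑ j : Fin d,
            (∑' β : Fin d → ℤ,
              (starRingEnd ℂ) ((C j ((U ^ m) ψ)) β) *
                (((β j : ℤ) : ℂ) * ((U ^ m) ψ) β)).re -
          ∑ m ∈ Finset.Icc 1 n, ∑ j : Fin d, ‖C j ((U ^ m) ψ)‖ ^ 2) ∧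
      (xNormSq (((star U) ^ n) ψ) - xNormSq ψ =
        -2 * ∑ m ∈ Finset.range n, ∑ j : Fin d,
            (∑' β : Fin d → ℤ,
              (starRingEnd ℂ) ((C j (((star U) ^ m) ψ)) β) *
                (((β j : ℤ) : ℂ) * (((star U) ^ m) ψ) β)).re +
          ∑ m ∈ Finset.range n, ∑ j : Fin d, ‖C j (((star U) ^ m) ψ)‖ ^ 2) := by
  intro ψ hψ n
  have hC' := isPosCommutator_of_apply hC
  have step {φ} (hφ : memDX φ) := xNormSq_sub_xNormSq_star_apply hU hC' hφ (hUD φ hφ).2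
  have hUψ := memDX_pow_apply (fun φ h => (hUD φ h).1) hψ
  have hU'ψ := memDX_pow_apply (fun φ h => (hUD φ h).2) hψ
  constructor
  · induction n with
    | zero => simp
    | succ n ih =>
      have h := step (hUψ (n + 1))
      rw [star_apply_pow_succ_apply hU] at h
      rw [Finset.sum_Icc_succ_top (by omega), Finset.sum_Icc_succ_top (by omega)]
      linarith
  · induction n with
    | zero => simp
    | succ n ih =>
      have h := step (hU'ψ n)
      rw [pow_succ', mul_apply_eq_comp, Finset.sum_range_succ, Finset.sum_range_succ]
      linarith
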